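/- If x ∈ D, then the Takagi function T is not approximately derivable at x (there is no real number L that is an approximate derivative of T at x). -/

import Mathlib

open MeasureTheory Filter Set

noncomputable section

/-- The set of dyadic numbers of level `n`: `{k / 2^n : k ∈ ℤ}`. -/
def Dset (n : ℕ) : Set ℝ := {y : ℝ | ∃ k : ℤ, y = (k : ℝ) / 2 ^ n}

/-- The set of all dyadic numbers. -/
def Ddyadic : Set ℝ := ⋃ n, Dset n

/-- `g k x = dist(x, D_k)`. -/
def g (k : ℕ) (x : ℝ) : ℝ := Metric.infDist x (Dset k)

/-- The Takagi function `T x = ∑_{k=1}^∞ g_k(x)`. -/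
def T (x : ℝ) : ℝ := ∑' k : ℕ, g (k + 1) x

/-- `G' n x = g_1'(x) + ⋯ + g_n'(x)` (so `G' 0 x = 0`). -/
def G' (n : ℕ) (x : ℝ) : ℝ := ∑ k ∈ Finset.range n, deriv (g (k + 1)) x

/-- `f` is approximately derivable at `x` with approximate derivative `L`:
for every `ε > 0`, the relative measure of the set of points `y` in `(x - r, x + r)`,
`y ≠ x`, where `|(f y - f x - L (y - x)) / (y - x)| ≥ ε`, divided by `2r`,
tends to `0` as `r → 0⁺`. -/
def ApproxDerivAt (f : ℝ → ℝ) (x L : ℝ) : Prop :=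
  ∀ ε > (0 : ℝ), Tendsto
    (fun r : ℝ => volume (Ioo (x - r) (x + r) ∩
        {y : ℝ | y ≠ x ∧ ε ≤ |(f y - f x - L * (y - x)) / (y - x)|}) /
      ENNReal.ofReal (2 * r))
    (nhdsWithin 0 (Ioi 0)) (nhds 0)

/-!
Around a point `x ∈ D_n` every `g_k` with `k ≥ n` vanishes at `x` and equals `|y - x|` on a
neighbourhood of size `2^{-(k+1)}`, while the finitely many `g_k` with `k < n` are 1-Lipschitz.
Hence `T y - T x ≥ (m - 2n) |y - x|` near `x` for every `m`: the difference quotients of `T` at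
`x` tend to `+∞` in absolute value, so for every `L` the exceptional set of the approximate
derivative fills the whole punctured interval `(x - r, x + r)` once `r` is small.
-/

open Metric Topology

lemma Dset_mono {n j : ℕ} (h : n ≤ j) : Dset n ⊆ Dset j := by
  rintro y ⟨k, rfl⟩
  refine ⟨k * 2 ^ (j - n), ?_⟩
  rw [show (2 : ℝ) ^ j = 2 ^ (j - n) * 2 ^ n by rw [← pow_add, Nat.sub_add_cancel h]]
  push_cast
  field_simp

lemma one_half_pow_le_dist_of_mem_Dset {j : ℕ} {a b : ℝ} (ha : a ∈ Dset j) (hb : b ∈ Dset j)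
    (hab : a ≠ b) : (1 / 2) ^ j ≤ dist a b := by
  obtain ⟨p, rfl⟩ := ha
  obtain ⟨q, rfl⟩ := hb
  have hpq : p ≠ q := fun h => hab (by rw [h])
  have h1 : (1 : ℝ) ≤ |(p : ℝ) - q| := by exact_mod_cast Int.one_le_abs (sub_ne_zero.mpr hpq)
  rw [Real.dist_eq, div_sub_div_same, abs_div, abs_of_pos (by positivity : (0 : ℝ) < 2 ^ j),
    one_div_pow]
  exact div_le_div_of_nonneg_right h1 (by positivity)

lemma Metric.infDist_eq_dist_of_forall_le_dist {α : Type*} [PseudoMetricSpace α] {s : Set α}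
    {x y : α} {δ : ℝ} (hx : x ∈ s) (hs : ∀ d ∈ s, d ≠ x → 2 * δ ≤ dist d x)
    (hy : dist y x ≤ δ) : infDist y s = dist y x := by
  refine le_antisymm (infDist_le_dist_of_mem hx) ((le_infDist ⟨x, hx⟩).mpr fun d hd => ?_)
  rcases eq_or_ne d x with rfl | hdx
  · exact le_rfl
  · linarith [hs d hd hdx, dist_triangle d y x, dist_comm d y]

lemma g_nonneg (k : ℕ) (y : ℝ) : 0 ≤ g k y := infDist_nonneg

lemma g_le (k : ℕ) (y : ℝ) : g k y ≤ (1 / 2) ^ k := by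
  have h2 : (0 : ℝ) < 2 ^ k := by positivity
  have hdist : y - ⌊y * 2 ^ k⌋ / 2 ^ k = Int.fract (y * 2 ^ k) / 2 ^ k := by
    rw [Int.fract, sub_div, mul_div_cancel_right₀ _ h2.ne']
  calc g k y ≤ dist y (⌊y * 2 ^ k⌋ / 2 ^ k) := infDist_le_dist_of_mem ⟨_, rfl⟩
    _ = Int.fract (y * 2 ^ k) / 2 ^ k := by
      rw [Real.dist_eq, hdist, abs_of_nonneg (div_nonneg (Int.fract_nonneg _) h2.le)]
    _ ≤ (1 / 2) ^ k := by
      rw [one_div_pow]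
      gcongr
      exact (Int.fract_lt_one _).le

lemma g_eq_zero_of_mem_Dset {n k : ℕ} (h : n ≤ k) {x : ℝ} (hx : x ∈ Dset n) : g k x = 0 :=
  infDist_zero_of_mem (Dset_mono h hx)

lemma g_eq_abs_sub_of_mem_Dset {n k : ℕ} (h : n ≤ k) {x y : ℝ} (hx : x ∈ Dset n)
    (hy : |y - x| ≤ (1 / 2) ^ (k + 1)) : g k y = |y - x| := by
  refine infDist_eq_dist_of_forall_le_dist (δ := (1 / 2) ^ (k + 1)) (Dset_mono h hx)
    (fun d hd hdx => ?_) hy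
  rw [show 2 * (1 / 2 : ℝ) ^ (k + 1) = (1 / 2) ^ k by ring]
  exact one_half_pow_le_dist_of_mem_Dset hd (Dset_mono h hx) hdx

lemma summable_g (y : ℝ) : Summable fun k => g (k + 1) y :=
  .of_nonneg_of_le (fun _ => g_nonneg _ _) (fun k => g_le (k + 1) y)
    (summable_geometric_two.comp_injective (add_left_injective 1))

lemma T_eq_sum_of_mem_Dset {n : ℕ} {x : ℝ} (hx : x ∈ Dset n) :
    T x = ∑ k ∈ Finset.range n, g (k + 1) x :=
  tsum_eq_sum fun k hk => g_eq_zero_of_mem_Dset (by simp at hk; omega) hx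

lemma sum_g_le_T (m : ℕ) (y : ℝ) : ∑ k ∈ Finset.range m, g (k + 1) y ≤ T y :=
  (summable_g y).sum_le_tsum _ fun _ _ => g_nonneg _ _

lemma sub_mul_abs_sub_le_T_sub {n k : ℕ} {x y : ℝ} (hx : x ∈ Dset n)
    (hy : |y - x| ≤ (1 / 2) ^ (n + k + 1)) :
    ((k : ℝ) - n) * |y - x| ≤ T y - T x := by
  have hlip : ∀ i ∈ Finset.range n, g (i + 1) x - |y - x| ≤ g (i + 1) y := fun i _ => by
    have h := infDist_le_infDist_add_dist (x := x) (y := y) (s := Dset (i + 1))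
    rw [Real.dist_eq, abs_sub_comm] at h
    exact sub_le_iff_le_add.mpr h
  have hfar : ∀ i ∈ Finset.range k, |y - x| = g (n + i + 1) y := fun i hi => by
    refine (g_eq_abs_sub_of_mem_Dset (by omega) hx (hy.trans ?_)).symm
    exact pow_le_pow_of_le_one (by norm_num) (by norm_num) (by simp at hi; omega)
  have hnear := Finset.sum_le_sum hlip
  rw [Finset.sum_sub_distrib, ← T_eq_sum_of_mem_Dset hx, Finset.sum_const,
    Finset.card_range, nsmul_eq_mul] at hnear
  have hT := sum_g_le_T (n + k) y
  rw [Finset.sum_range_add, ← Finset.sum_congr rfl hfar, Finset.sum_const,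
    Finset.card_range, nsmul_eq_mul] at hT
  linarith

lemma eventually_mul_abs_sub_le_T_sub {x : ℝ} (hx : x ∈ Ddyadic) (A : ℝ) :
    ∀ᶠ y in 𝓝 x, A * |y - x| ≤ T y - T x := by
  obtain ⟨n, hn⟩ := mem_iUnion.mp hx
  set k := n + ⌈A⌉₊
  filter_upwards [closedBall_mem_nhds x (by positivity : (0 : ℝ) < (1 / 2) ^ (n + k + 1))]
    with y hy
  have hA : A ≤ (k : ℝ) - n := by
    simp only [k, Nat.cast_add]
    linarith [Nat.le_ceil A]
  exact (mul_le_mul_of_nonneg_right hA (abs_nonneg _)).trans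
    (sub_mul_abs_sub_le_T_sub hn (by rwa [mem_closedBall, Real.dist_eq] at hy))

lemma eventually_le_abs_slope_sub {f : ℝ → ℝ} {x : ℝ}
    (hf : ∀ A : ℝ, ∀ᶠ y in 𝓝 x, A * |y - x| ≤ f y - f x) (L ε : ℝ) :
    ∀ᶠ y in 𝓝[≠] x, ε ≤ |(f y - f x - L * (y - x)) / (y - x)| := by
  filter_upwards [nhdsWithin_le_nhds (hf (|L| + ε)), self_mem_nhdsWithin] with y hy hyx
  have hpos : 0 < |y - x| := abs_pos.mpr (sub_ne_zero.mpr hyx)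
  have hslope : |L| + ε ≤ |(f y - f x) / (y - x)| := by
    rw [abs_div, le_div_iff₀ hpos]
    exact hy.trans (le_abs_self _)
  calc ε ≤ |(f y - f x) / (y - x)| - |L| := by linarith
    _ ≤ |(f y - f x) / (y - x) - L| := abs_sub_abs_le_abs_sub _ _
    _ = |(f y - f x - L * (y - x)) / (y - x)| := by
      rw [sub_div (f y - f x), mul_div_cancel_right₀ _ (sub_ne_zero.mpr hyx)]

/-- If the exceptional set contains a whole punctured neighbourhood, its density is `1`. -/
lemma not_approxDerivAt_of_eventually_le {f : ℝ → ℝ} {x L ε : ℝ} (hε : 0 < ε)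
    (h : ∀ᶠ y in 𝓝[≠] x, ε ≤ |(f y - f x - L * (y - x)) / (y - x)|) :
    ¬ ApproxDerivAt f x L := by
  intro hL
  obtain ⟨δ, hδ, hball⟩ := Metric.eventually_nhds_iff.mp (eventually_nhdsWithin_iff.mp h)
  have hone : ∀ᶠ r in 𝓝[>] (0 : ℝ), volume (Ioo (x - r) (x + r) ∩
      {y | y ≠ x ∧ ε ≤ |(f y - f x - L * (y - x)) / (y - x)|}) / ENNReal.ofReal (2 * r) = 1 := by
    filter_upwards [Ioo_mem_nhdsGT hδ] with r ⟨hr0, hrδ⟩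
    have hset : Ioo (x - r) (x + r) ∩
        {y | y ≠ x ∧ ε ≤ |(f y - f x - L * (y - x)) / (y - x)|} = Ioo (x - r) (x + r) \ {x} := by
      ext y
      simp only [mem_inter_iff, mem_Ioo, mem_ofPred_eq, Set.mem_sdiff, mem_singleton_iff]
      refine ⟨fun ⟨hy, hyx, _⟩ => ⟨hy, hyx⟩, fun ⟨hy, hyx⟩ => ⟨hy, hyx, hball ?_ hyx⟩⟩
      rw [Real.dist_eq, abs_lt]
      constructor <;> linarith [hy.1, hy.2]
    rw [hset, measure_sdiff_null Real.volume_singleton, Real.volume_Ioo,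
      show x + r - (x - r) = 2 * r by ring]
    exact ENNReal.div_self (ENNReal.ofReal_pos.mpr (by linarith)).ne' ENNReal.ofReal_ne_top
  exact one_ne_zero (tendsto_nhds_unique tendsto_const_nhds ((hL ε hε).congr' hone))

theorem takagi_not_approx_deriv_dyadic (x : ℝ) (hx : x ∈ Ddyadic) :
    ¬ ∃ L : ℝ, ApproxDerivAt T x L := by
  rintro ⟨L, hL⟩
  exact not_approxDerivAt_of_eventually_le one_pos
    (eventually_le_abs_slope_sub (eventually_mul_abs_sub_le_T_sub hx) L 1) hL
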